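/- arXiv:2306.16738 — 2 statements merged into one kernel-verified Lean document; each statement's English description precedes it below -/
import Mathlib

section
/- Let f : ℝ^d → ℝ be G-Lipschitz with respect to the ℓ∞ norm, B = {x : ‖x − x₀‖_∞ ≤ ε} for some ε > 0, and x* ∈ B a maximizer of f on B. For ζ > 0, let A_ζ = {x ∈ B : f(x) + ζ ≥ f(x*)}. Then Vol(A_ζ) ≥ min{ε^d, (ζ/G)^d}. -/
open MeasureTheory

theorem stmt3 {d : ℕ} (hd : 1 ≤ d) (G ε ζ : ℝ) (hG : 0 < G) (hε : 0 < ε) (hζ : 0 < ζ)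
    (f : (Fin d → ℝ) → ℝ)
    (hLip : ∀ x y, |f x - f y| ≤ G * dist x y)
    (x₀ : Fin d → ℝ)
    (xstar : Fin d → ℝ) (hxstar : xstar ∈ Metric.closedBall x₀ ε)
    (hmax : ∀ x ∈ Metric.closedBall x₀ ε, f x ≤ f xstar) :
    ENNReal.ofReal (min (ε ^ d) ((ζ / G) ^ d))
      ≤ volume {x | x ∈ Metric.closedBall x₀ ε ∧ f xstar ≤ f x + ζ} := by
  set r : ℝ := min ε (ζ / G) with hrdef
  have hr0 : 0 < r := lt_min hε (div_pos hζ hG)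
  have hrε : r ≤ ε := min_le_left _ _
  have hrζ : r ≤ ζ / G := min_le_right _ _
  set a : Fin d → ℝ := fun i => min (xstar i) (x₀ i + ε - r) with ha
  have hxs : ∀ i, |xstar i - x₀ i| ≤ ε := by
    intro i
    have h1 : dist (xstar i) (x₀ i) ≤ dist xstar x₀ := dist_le_pi_dist xstar x₀ i
    have h2 : dist xstar x₀ ≤ ε := Metric.mem_closedBall.mp hxstar
    calc |xstar i - x₀ i| = dist (xstar i) (x₀ i) := (Real.dist_eq _ _).symm
      _ ≤ ε := h1.trans h2
  have hsub : (Set.pi Set.univ fun i => Set.Icc (a i) (a i + r)) ⊆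
      {x | x ∈ Metric.closedBall x₀ ε ∧ f xstar ≤ f x + ζ} := by
    intro x hx
    simp only [Set.mem_pi, Set.mem_univ, forall_true_left, Set.mem_Icc] at hx
    have hcoord0 : ∀ i, dist (x i) (x₀ i) ≤ ε := by
      intro i
      have hxs' := hxs i
      have h1 := (hx i).1
      have h2 := (hx i).2
      rw [Real.dist_eq, abs_le]
      rw [abs_le] at hxs'
      rcases le_total (xstar i) (x₀ i + ε - r) with h | h <;>
        simp only [ha, min_eq_left h, min_eq_right h] at h1 h2 <;>
        constructor <;> linarith
    have hcoords : ∀ i, dist (x i) (xstar i) ≤ r := by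
      intro i
      have hxs' := hxs i
      have h1 := (hx i).1
      have h2 := (hx i).2
      have hmin1 : a i ≤ xstar i := min_le_left _ _
      have hmin2 : xstar i - r ≤ a i := by
        rw [abs_le] at hxs'
        exact le_min (by linarith) (by linarith)
      rw [Real.dist_eq, abs_le]
      constructor <;> linarith
    have hball : x ∈ Metric.closedBall x₀ ε := by
      rw [Metric.mem_closedBall]
      exact dist_pi_le_iff hε.le |>.mpr hcoord0
    refine ⟨hball, ?_⟩
    have hdist : dist x xstar ≤ r := dist_pi_le_iff hr0.le |>.mpr hcoords
    have := hLip xstar x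
    have habs : f xstar - f x ≤ G * dist xstar x := (le_abs_self _).trans this
    rw [dist_comm] at habs
    have : G * dist x xstar ≤ G * r := by
      exact mul_le_mul_of_nonneg_left hdist hG.le
    have hGr : G * r ≤ ζ := by
      calc G * r ≤ G * (ζ / G) := mul_le_mul_of_nonneg_left hrζ hG.le
        _ = ζ := by field_simp
    linarith
  have hvol : volume (Set.pi Set.univ fun i => Set.Icc (a i) (a i + r))
      = ENNReal.ofReal (r ^ d) := by
    rw [volume_pi_pi]
    simp only [Real.volume_Icc, add_sub_cancel_left]
    rw [Finset.prod_const, Finset.card_univ, Fintype.card_fin,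
      ENNReal.ofReal_pow hr0.le]
  have hmin : min (ε ^ d) ((ζ / G) ^ d) = r ^ d := by
    rcases le_total ε (ζ / G) with h | h
    · rw [hrdef, min_eq_left h, min_eq_left (pow_le_pow_left₀ hε.le h d)]
    · rw [hrdef, min_eq_right h, min_eq_right (pow_le_pow_left₀ (by positivity) h d)]
  calc ENNReal.ofReal (min (ε ^ d) ((ζ / G) ^ d)) = ENNReal.ofReal (r ^ d) := by rw [hmin]
    _ = volume (Set.pi Set.univ fun i => Set.Icc (a i) (a i + r)) := hvol.symm
    _ ≤ _ := measure_mono hsub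
end

section
/- Let B ⊆ ℝ^d be compact with Vol(B) > 0 and f : B → ℝ bounded measurable with maximum M attained at x* ∈ B. Suppose for ζ > 0 the set A_ζ = {x ∈ B : f(x) ≥ M − ζ} satisfies Vol(A_ζ) ≥ min{ε^d, (ζ/G)^d} with Vol(B) = (2ε)^d. Then for β > 0, the soft-max gap M − β log((1/Vol(B))∫_B e^{f/β}) is at most ζ + βd·max{log 2, log(2εG/ζ)}. -/
/-! On the superlevel set `A_ζ` the integrand `exp (f / β)` is at least `exp ((M - ζ) / β)`, so
(Markov) the integral over `B` is at least `exp ((M - ζ) / β) · Vol(A_ζ)`. Taking `β log` of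
the average turns this into `M - ζ - β log (Vol(B) / Vol(A_ζ))`, and the volume ratio is
bounded by `(2ε / min(ε, ζ/G))^d`. -/

open MeasureTheory Real

section SoftMax

variable {α : Type*} [MeasurableSpace α] {μ : Measure α} {s : Set α} {f : α → ℝ}
  {β M : ℝ}

theorem integrableOn_exp_div_of_le (hf : Measurable f) (hβ : 0 ≤ β) (hs : μ s ≠ ⊤)
    (hM : ∀ x ∈ s, f x ≤ M) : IntegrableOn (fun x => exp (f x / β)) s μ := by
  refine Measure.integrableOn_of_bounded (M := exp (M / β)) hs
    (hf.div_const β).exp.aestronglyMeasurable ?_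
  have hM_ae : ∀ᵐ x ∂μ.restrict s, f x ≤ M :=
    (ae_restrict_iff (measurableSet_le hf measurable_const)).2 (.of_forall hM)
  filter_upwards [hM_ae] with x hx
  rw [norm_of_nonneg (exp_pos _).le]
  gcongr

theorem exp_div_mul_measureReal_le_setIntegral_exp (hf : Measurable f) (hβ : 0 < β)
    (hint : IntegrableOn (fun x => exp (f x / β)) s μ) (c : ℝ) :
    exp (c / β) * μ.real {x | x ∈ s ∧ c ≤ f x} ≤ ∫ x in s, exp (f x / β) ∂μ := by
  have hmarkov := mul_meas_ge_le_integral_of_nonneg (μ := μ.restrict s)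
    (.of_forall fun x => (exp_pos (f x / β)).le) hint (exp (c / β))
  have hlevel : {x | exp (c / β) ≤ exp (f x / β)} = {x | c ≤ f x} := by
    ext x
    simp only [Set.mem_ofPred_eq, exp_le_exp, div_le_div_iff_of_pos_right hβ]
  rwa [hlevel, measureReal_restrict_apply (measurableSet_le measurable_const hf),
    Set.inter_comm] at hmarkov

theorem sub_mul_log_setAverage_exp_le (hf : Measurable f) (hβ : 0 < β) (hs : μ s ≠ ⊤)
    (hM : ∀ x ∈ s, f x ≤ M) {ζ a : ℝ} (ha : 0 < a)
    (hA : a ≤ μ.real {x | x ∈ s ∧ M - ζ ≤ f x}) :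
    M - β * log ((μ.real s)⁻¹ * ∫ x in s, exp (f x / β) ∂μ)
      ≤ ζ + β * log (μ.real s / a) := by
  have haV : a ≤ μ.real s := hA.trans (measureReal_mono (fun x hx => hx.1) hs)
  have hV : 0 < μ.real s := ha.trans_le haV
  have hlow : a / μ.real s * exp ((M - ζ) / β)
      ≤ (μ.real s)⁻¹ * ∫ x in s, exp (f x / β) ∂μ := by
    rw [div_eq_inv_mul, mul_assoc]
    gcongr
    calc a * exp ((M - ζ) / β)
        ≤ exp ((M - ζ) / β) * μ.real {x | x ∈ s ∧ M - ζ ≤ f x} := by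
          rw [mul_comm]; gcongr
      _ ≤ ∫ x in s, exp (f x / β) ∂μ :=
          exp_div_mul_measureReal_le_setIntegral_exp hf hβ
            (integrableOn_exp_div_of_le hf hβ.le hs hM) (M - ζ)
  have hlog : log (a / μ.real s) + (M - ζ) / β
      ≤ log ((μ.real s)⁻¹ * ∫ x in s, exp (f x / β) ∂μ) := by
    rw [← log_exp ((M - ζ) / β), ← log_mul (by positivity) (exp_pos _).ne']
    exact log_le_log (by positivity) hlow
  calc M - β * log ((μ.real s)⁻¹ * ∫ x in s, exp (f x / β) ∂μ)
      ≤ M - β * (log (a / μ.real s) + (M - ζ) / β) := by gcongr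
    _ = ζ + β * log (μ.real s / a) := by
      rw [← inv_div, log_inv]
      field_simp
      ring

end SoftMax

theorem log_pow_div_min_pow {r p q : ℝ} (hr : 0 < r) (hp : 0 < p) (hq : 0 < q) (d : ℕ) :
    log (r ^ d / min (p ^ d) (q ^ d)) = d * max (log (r / p)) (log (r / q)) := by
  rcases le_total p q with h | h
  · rw [min_eq_left (pow_le_pow_left₀ hp.le h d),
      max_eq_left (log_le_log (by positivity) (div_le_div_of_nonneg_left hr.le hp h)),
      ← div_pow, log_pow]
  · rw [min_eq_right (pow_le_pow_left₀ hq.le h d),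
      max_eq_right (log_le_log (by positivity) (div_le_div_of_nonneg_left hr.le hq h)),
      ← div_pow, log_pow]

theorem stmt18_general {d : ℕ} (B : Set (Fin d → ℝ))
    (ε G β ζ : ℝ) (hε : 0 < ε) (hG : 0 < G) (hβ : 0 < β) (hζ : 0 < ζ)
    (hvolB : volume B = ENNReal.ofReal ((2 * ε) ^ d))
    (f : (Fin d → ℝ) → ℝ) (hf : Measurable f)
    (M : ℝ)
    (hM : ∀ x ∈ B, f x ≤ M)
    (hA : ENNReal.ofReal (min (ε ^ d) ((ζ / G) ^ d))
        ≤ volume {x | x ∈ B ∧ M - ζ ≤ f x}) :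
    M - β * Real.log ((volume B).toReal⁻¹ * ∫ x in B, Real.exp (f x / β))
      ≤ ζ + β * d * max (Real.log 2) (Real.log (2 * ε * G / ζ)) := by
  have hB : volume B ≠ ⊤ := hvolB ▸ ENNReal.ofReal_ne_top
  have hvol : volume.real B = (2 * ε) ^ d := by
    rw [measureReal_def, hvolB, ENNReal.toReal_ofReal (by positivity)]
  have hA' : min (ε ^ d) ((ζ / G) ^ d) ≤ volume.real {x | x ∈ B ∧ M - ζ ≤ f x} :=
    (ENNReal.ofReal_le_iff_le_toReal (ne_top_of_le_ne_top hB (measure_mono fun x hx => hx.1))).1 hA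
  calc M - β * log ((volume.real B)⁻¹ * ∫ x in B, exp (f x / β))
      ≤ ζ + β * log ((2 * ε) ^ d / min (ε ^ d) ((ζ / G) ^ d)) :=
        hvol ▸ sub_mul_log_setAverage_exp_le hf hβ hB hM (by positivity) hA'
    _ = ζ + β * d * max (log (2 * ε / ε)) (log (2 * ε / (ζ / G))) := by
        rw [log_pow_div_min_pow (by positivity) hε (by positivity), mul_assoc]
    _ = ζ + β * d * max (log 2) (log (2 * ε * G / ζ)) := by
        rw [mul_div_cancel_right₀ 2 hε.ne', div_div_eq_mul_div]

theorem stmt18 {d : ℕ} (hd : 1 ≤ d) (B : Set (Fin d → ℝ)) (hB : IsCompact B)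
    (ε G β ζ : ℝ) (hε : 0 < ε) (hG : 0 < G) (hβ : 0 < β) (hζ : 0 < ζ)
    (hvolB : volume B = ENNReal.ofReal ((2 * ε) ^ d))
    (f : (Fin d → ℝ) → ℝ) (hf : Measurable f) (C : ℝ) (hbd : ∀ x ∈ B, |f x| ≤ C)
    (M : ℝ) (xstar : Fin d → ℝ) (hxstar : xstar ∈ B) (hMx : f xstar = M)
    (hM : ∀ x ∈ B, f x ≤ M)
    (hA : ENNReal.ofReal (min (ε ^ d) ((ζ / G) ^ d))
        ≤ volume {x | x ∈ B ∧ M - ζ ≤ f x}) :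
    M - β * Real.log ((volume B).toReal⁻¹ * ∫ x in B, Real.exp (f x / β))
      ≤ ζ + β * d * max (Real.log 2) (Real.log (2 * ε * G / ζ)) :=
  stmt18_general B ε G β ζ hε hG hβ hζ hvolB f hf M hM hA
end
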